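/- Let V be a positive definite d×d real matrix and x₁,…,x_k ∈ ℝ^d. Then log det(V + Σ_{i=1}^k x_i x_iᵀ) ≥ log det(V) + (1/k) Σ_{i=1}^k log det(I + k · V^{-1/2} x_i (V^{-1/2} x_i)ᵀ). -/

import Mathlib

/-! With `S` the symmetric square root of `V` and `wᵢ = S⁻¹ xᵢ`, the congruence
`V + ∑ xᵢ xᵢᵀ = S (I + ∑ wᵢ wᵢᵀ) S` reduces the left side to `log det V + log det (I + ∑ wᵢ wᵢᵀ)`.
Expanding the determinant over the eigenvalues of the positive semidefinite `∑ wᵢ wᵢᵀ` gives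
`det (I + ∑ wᵢ wᵢᵀ) ≥ 1 + ∑ |wᵢ|²`, while each term on the right is `log (1 + k |wᵢ|²)` by the
matrix determinant lemma. Concavity of `log` at the points `1 + k |wᵢ|²`, whose mean is
`1 + ∑ |wᵢ|²`, finishes the proof. -/

open Matrix

/-- The old Mathlib `Matrix.PosSemidef.sqrt` (removed upstream), restored with its old definition. -/
noncomputable def Matrix.PosSemidef.sqrt {n 𝕜 : Type*} [Fintype n] [RCLike 𝕜] [PartialOrder 𝕜] [DecidableEq n]
    {A : Matrix n n 𝕜} (hA : A.PosSemidef) : Matrix n n 𝕜 :=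
  hA.1.eigenvectorUnitary.1 * diagonal ((↑) ∘ (Real.sqrt ∘ hA.1.eigenvalues)) *
    (star hA.1.eigenvectorUnitary : Matrix n n 𝕜)

open Finset
open scoped MatrixOrder

theorem Finset.one_add_sum_le_prod_one_add {ι R : Type*} [CommSemiring R] [PartialOrder R]
    [IsOrderedRing R] (s : Finset ι) {f : ι → R}
    (hf : ∀ i ∈ s, 0 ≤ f i) : 1 + ∑ i ∈ s, f i ≤ ∏ i ∈ s, (1 + f i) := by
  induction s using Finset.cons_induction with
  | empty => simp
  | cons a s ha ih =>
    have hfa := hf a (mem_cons_self a s)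
    have hs := fun i hi => hf i (mem_cons_of_mem hi)
    rw [sum_cons, prod_cons]
    calc 1 + (f a + ∑ i ∈ s, f i) ≤ (1 + f a) * (1 + ∑ i ∈ s, f i) := by
          rw [show (1 + f a) * (1 + ∑ i ∈ s, f i) = 1 + (f a + ∑ i ∈ s, f i) + f a * ∑ i ∈ s, f i
            by ring]
          exact le_add_of_nonneg_right (mul_nonneg hfa (sum_nonneg hs))
      _ ≤ (1 + f a) * ∏ i ∈ s, (1 + f i) :=
          mul_le_mul_of_nonneg_left (ih hs) (add_nonneg zero_le_one hfa)

theorem Real.inv_card_mul_sum_log_one_add_card_mul_le {ι : Type*} [Fintype ι] {s : ι → ℝ}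
    (hs : ∀ i, 0 ≤ s i) :
    (1 / (Fintype.card ι : ℝ)) * ∑ i, Real.log (1 + Fintype.card ι * s i) ≤
      Real.log (1 + ∑ i, s i) := by
  rcases isEmpty_or_nonempty ι with hι | hι
  · simp -- both sides vanish, the left one because `1 / 0 = 0`
  have hn : (Fintype.card ι : ℝ) ≠ 0 := by positivity
  have := strictConcaveOn_log_Ioi.concaveOn.le_map_sum (t := univ)
    (w := fun _ => 1 / (Fintype.card ι : ℝ)) (p := fun i => 1 + Fintype.card ι * s i)
    (by intros; positivity) (by simp [hn])
    fun i _ => add_pos_of_pos_of_nonneg one_pos (mul_nonneg (Nat.cast_nonneg _) (hs i))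
  have hmean : ∑ i, (1 / (Fintype.card ι : ℝ)) • (1 + Fintype.card ι * s i) = 1 + ∑ i, s i := by
    simp only [smul_eq_mul, ← mul_sum, sum_add_distrib, sum_const, card_univ, nsmul_eq_mul]
    field_simp
  rw [hmean] at this
  simpa only [smul_eq_mul, mul_sum] using this

namespace Matrix

variable {n : Type*} [Fintype n] [DecidableEq n]

theorem PosSemidef.sqrt_eq_cfcSqrt {A : Matrix n n ℝ} (hA : A.PosSemidef) :
    hA.sqrt = CFC.sqrt A := by
  rw [CFC.sqrt_eq_cfc, cfc_nnreal_eq_real _ A, hA.1.cfc_eq, IsHermitian.cfc,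
    Unitary.conjStarAlgAut_apply]
  simp [PosSemidef.sqrt, Function.comp_def, max_eq_left (hA.eigenvalues_nonneg _)]

theorem PosSemidef.sqrt_mul_transpose_sqrt {A : Matrix n n ℝ} (hA : A.PosSemidef) :
    hA.sqrt * hA.sqrtᵀ = A := by
  have hsymm : (CFC.sqrt A)ᵀ = CFC.sqrt A := by
    simpa [conjTranspose_eq_transpose_of_trivial] using
      (CFC.sqrt_nonneg A).posSemidef.isHermitian.eq
  rw [hA.sqrt_eq_cfcSqrt, hsymm, CFC.sqrt_mul_sqrt_self A hA.nonneg]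

theorem IsHermitian.det_cfc {A : Matrix n n ℝ} (hA : A.IsHermitian) (f : ℝ → ℝ) :
    (cfc f A).det = ∏ i, f (hA.eigenvalues i) := by
  simp [hA.cfc_eq, IsHermitian.cfc, -Unitary.conjStarAlgAut_apply]

theorem PosSemidef.one_add_trace_le_det_one_add {A : Matrix n n ℝ} (hA : A.PosSemidef) :
    1 + A.trace ≤ (1 + A).det := by
  have h1A : cfc (fun t : ℝ => 1 + t) A = 1 + A :=
    (cfc_const_add (1 : ℝ) id A (ha := hA.1)).trans (by rw [map_one, cfc_id ℝ A hA.1])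
  rw [← h1A, hA.1.det_cfc, hA.1.trace_eq_sum_eigenvalues]
  exact one_add_sum_le_prod_one_add _ fun i _ => hA.eigenvalues_nonneg i

theorem det_one_add_smul_vecMulVec_self {R : Type*} [CommRing R] (c : R) (v : n → R) :
    (1 + c • vecMulVec v v).det = 1 + c * (v ⬝ᵥ v) := by
  rw [← smul_vecMulVec, vecMulVec_eq Unit, det_one_add_replicateCol_mul_replicateRow,
    dotProduct_smul, smul_eq_mul]

omit [DecidableEq n] in
theorem vecMulVec_mulVec_self {m R : Type*} [CommRing R] (S : Matrix m n R) (w : n → R) :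
    vecMulVec (S *ᵥ w) (S *ᵥ w) = S * vecMulVec w w * Sᵀ := by
  rw [mul_vecMulVec, vecMulVec_mul, vecMul_transpose]

theorem det_mul_transpose_add_sum_vecMulVec {ι R : Type*} [Fintype ι] [CommRing R]
    {S : Matrix n n R} (hS : IsUnit S.det) (x : ι → n → R) :
    (S * Sᵀ + ∑ i, vecMulVec (x i) (x i)).det =
      (S * Sᵀ).det * (1 + ∑ i, vecMulVec (S⁻¹ *ᵥ x i) (S⁻¹ *ᵥ x i)).det := by
  have hx : ∀ i, x i = S *ᵥ (S⁻¹ *ᵥ x i) := fun i => by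
    rw [mulVec_mulVec, mul_nonsing_inv S hS, one_mulVec]
  have : S * Sᵀ + ∑ i, vecMulVec (x i) (x i) =
      S * (1 + ∑ i, vecMulVec (S⁻¹ *ᵥ x i) (S⁻¹ *ᵥ x i)) * Sᵀ := by
    conv_lhs => enter [2, 2, i]; rw [hx i, vecMulVec_mulVec_self]
    rw [Matrix.mul_add, Matrix.add_mul, Matrix.mul_one, mul_sum, sum_mul]
  rw [this, det_mul, det_mul, det_mul]
  ring

end Matrix

theorem logDet_jensen_rank_one_updates_general {d k : ℕ}
    (V : Matrix (Fin d) (Fin d) ℝ) (hV : V.PosDef) (x : Fin k → (Fin d → ℝ)) :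
    Real.log (V + ∑ i, vecMulVec (x i) (x i)).det ≥
      Real.log V.det +
        (1 / (k : ℝ)) * ∑ i, Real.log
          ((1 : Matrix (Fin d) (Fin d) ℝ) +
            (k : ℝ) • vecMulVec (hV.posSemidef.sqrt⁻¹ *ᵥ x i) (hV.posSemidef.sqrt⁻¹ *ᵥ x i)).det := by
  set S := hV.posSemidef.sqrt
  have hSS : S * Sᵀ = V := hV.posSemidef.sqrt_mul_transpose_sqrt
  have hS : IsUnit S.det :=
    isUnit_of_mul_isUnit_left (y := Sᵀ.det) (by rw [← det_mul, hSS]; exact hV.det_pos.ne'.isUnit)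
  set w := fun i => S⁻¹ *ᵥ x i
  have hw : ∀ i, 0 ≤ w i ⬝ᵥ w i := fun i => by simpa using dotProduct_star_self_nonneg (w i)
  have hM : (∑ i, vecMulVec (w i) (w i)).PosSemidef :=
    posSemidef_sum _ fun i _ => by simpa using posSemidef_vecMulVec_self_star (w i)
  have hdet : (V + ∑ i, vecMulVec (x i) (x i)).det =
      V.det * (1 + ∑ i, vecMulVec (w i) (w i)).det := by
    rw [← hSS]
    exact det_mul_transpose_add_sum_vecMulVec hS x
  have htrace : 1 + ∑ i, w i ⬝ᵥ w i ≤ (1 + ∑ i, vecMulVec (w i) (w i)).det := by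
    simpa [trace_sum, trace_vecMulVec] using hM.one_add_trace_le_det_one_add
  have hjensen := Real.inv_card_mul_sum_log_one_add_card_mul_le hw
  rw [Fintype.card_fin] at hjensen
  have hsum : 0 ≤ ∑ i, w i ⬝ᵥ w i := sum_nonneg fun i _ => hw i
  have hlog := Real.log_le_log (by linarith) htrace
  simp only [det_one_add_smul_vecMulVec_self]
  rw [hdet, Real.log_mul hV.det_pos.ne' (by linarith)]
  linarith

theorem logDet_jensen_rank_one_updates {d k : ℕ} (hk : 0 < k)
    (V : Matrix (Fin d) (Fin d) ℝ) (hV : V.PosDef) (x : Fin k → (Fin d → ℝ)) :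
    Real.log (V + ∑ i, vecMulVec (x i) (x i)).det ≥
      Real.log V.det +
        (1 / (k : ℝ)) * ∑ i, Real.log
          ((1 : Matrix (Fin d) (Fin d) ℝ) +
            (k : ℝ) • vecMulVec (hV.posSemidef.sqrt⁻¹ *ᵥ x i) (hV.posSemidef.sqrt⁻¹ *ᵥ x i)).det :=
  logDet_jensen_rank_one_updates_general V hV x
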